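/- arXiv:2011.02835 — 6 statements merged into one kernel-verified Lean document; each statement's English description precedes it below -/
import Mathlib

section
/- Let a be symmetric positive definite, A skew-symmetric, both d×d real, and let V ∈ ℝ^{d×m} have linearly independent columns. Then Π := Vᵀ(a − A)⁻¹V is invertible, and its symmetric part ½(Π + Πᵀ) = Vᵀ(a−A)⁻¹ a (a+A)⁻¹ V is positive definite. -/
open Matrix

/-
A matrix `M` with `M + Mᴴ` positive definite is invertible, since `M x = 0` forces
`xᴴ (M + Mᴴ) x = 0`. This applies to `P = a - A`, for which `P + Pᴴ = 2a`, and hence also to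
`Pᴴ = a + A`. The identity `P⁻¹ + Q⁻¹ = P⁻¹ (P + Q) Q⁻¹` with `Q = Pᴴ` then gives
`Π + Πᴴ = Vᴴ (P⁻¹ + (Pᴴ)⁻¹) V = 2 Bᴴ a B` with `B = (a + A)⁻¹ V`, which is positive definite
because `B` is injective; so the first remark applies to `Π` as well.
-/

namespace Matrix

variable {n : Type*} [Fintype n] [DecidableEq n]

theorem isUnit_of_posDef_add_conjTranspose {K : Type*} [Field K] [PartialOrder K] [StarRing K]
    {M : Matrix n n K} (hM : (M + Mᴴ).PosDef) : IsUnit M := by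
  by_contra h
  obtain ⟨x, hx, hMx⟩ : ∃ x ≠ 0, M *ᵥ x = 0 := by
    obtain ⟨x, y, hxy, hne⟩ := Function.not_injective_iff.mp <| mulVec_injective_iff_isUnit.not.mpr h
    exact ⟨x - y, sub_ne_zero.mpr hne, by rw [mulVec_sub, hxy, sub_self]⟩
  have hMHx : star x ⬝ᵥ (Mᴴ *ᵥ x) = 0 := by
    rw [dotProduct_mulVec, ← star_mulVec, hMx, star_zero, zero_dotProduct]
  simpa [add_mulVec, hMx, hMHx] using hM.dotProduct_mulVec_pos hx

theorem nonsing_inv_add_nonsing_inv {R : Type*} [CommRing R] {P Q : Matrix n n R}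
    (hP : IsUnit P) (hQ : IsUnit Q) : P⁻¹ + Q⁻¹ = P⁻¹ * (P + Q) * Q⁻¹ := by
  simp only [nonsing_inv_eq_ringInverse]
  exact Ring.inverse_add_inverse (iff_of_true hP hQ)

section SkewPerturbation

variable {K : Type*} [Field K] [PartialOrder K] [StarRing K] [AddLeftMono K]
  {a A : Matrix n n K}

theorem PosDef.isUnit_sub_of_skew (ha : a.PosDef) (hA : Aᴴ = -A) : IsUnit (a - A) := by
  refine isUnit_of_posDef_add_conjTranspose ?_
  rw [conjTranspose_sub, ha.isHermitian.eq, hA, sub_neg_eq_add,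
    show a - A + (a + A) = a + a by abel]
  exact ha.add ha

theorem PosDef.isUnit_add_of_skew (ha : a.PosDef) (hA : Aᴴ = -A) : IsUnit (a + A) := by
  simpa using ha.isUnit_sub_of_skew (A := -A) (by rw [conjTranspose_neg, hA])

theorem PosDef.conjTranspose_mul_inv_sub_mul_add_conjTranspose {m : Type*} [Fintype m]
    (ha : a.PosDef) (hA : Aᴴ = -A) (V : Matrix n m K) :
    Vᴴ * (a - A)⁻¹ * V + (Vᴴ * (a - A)⁻¹ * V)ᴴ =
      Vᴴ * (a - A)⁻¹ * a * (a + A)⁻¹ * V + Vᴴ * (a - A)⁻¹ * a * (a + A)⁻¹ * V := by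
  have hinvH : ((a - A)⁻¹)ᴴ = (a + A)⁻¹ := by
    rw [conjTranspose_nonsing_inv, conjTranspose_sub, ha.isHermitian.eq, hA, sub_neg_eq_add]
  have hinv : (a - A)⁻¹ + (a + A)⁻¹ = (a - A)⁻¹ * (a + a) * (a + A)⁻¹ := by
    rw [nonsing_inv_add_nonsing_inv (ha.isUnit_sub_of_skew hA) (ha.isUnit_add_of_skew hA),
      show a - A + (a + A) = a + a by abel]
  rw [conjTranspose_mul, conjTranspose_mul, conjTranspose_conjTranspose, hinvH]
  calc _ = Vᴴ * ((a - A)⁻¹ + (a + A)⁻¹) * V := by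
        simp only [Matrix.mul_add, Matrix.add_mul, Matrix.mul_assoc]
    _ = _ := by
        rw [hinv]
        simp only [Matrix.mul_add, Matrix.add_mul, Matrix.mul_assoc]

theorem PosDef.conjTranspose_mul_inv_sub_mul_mul_inv_add_mul {m : Type*} [Fintype m]
    (ha : a.PosDef) (hA : Aᴴ = -A) {V : Matrix n m K} (hV : Function.Injective V.mulVec) :
    (Vᴴ * (a - A)⁻¹ * a * (a + A)⁻¹ * V).PosDef := by
  have hB : Function.Injective ((a + A)⁻¹ * V).mulVec := by
    have hinv :=
      mulVec_injective_of_isUnit (isUnit_nonsing_inv_iff.mpr (ha.isUnit_add_of_skew hA))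
    simpa only [Function.comp_def, mulVec_mulVec] using hinv.comp hV
  have hBH : ((a + A)⁻¹ * V)ᴴ = Vᴴ * (a - A)⁻¹ := by
    rw [conjTranspose_mul, conjTranspose_nonsing_inv, conjTranspose_add, ha.isHermitian.eq, hA,
      ← sub_eq_add_neg]
  simpa only [hBH, Matrix.mul_assoc] using ha.conjTranspose_mul_mul_same hB

end SkewPerturbation

end Matrix

/-- `Π := Vᵀ(a - A)⁻¹V` is invertible and its symmetric part
`½(Π + Πᵀ) = Vᵀ(a-A)⁻¹ a (a+A)⁻¹ V` is positive definite. -/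
theorem stmt4 {d m : ℕ} (a A : Matrix (Fin d) (Fin d) ℝ) (V : Matrix (Fin d) (Fin m) ℝ)
    (ha : a.PosDef) (hA : Aᵀ = -A) (hV : Function.Injective V.mulVec) :
    IsUnit (Vᵀ * (a - A)⁻¹ * V) ∧
      (1 / 2 : ℝ) • (Vᵀ * (a - A)⁻¹ * V + (Vᵀ * (a - A)⁻¹ * V)ᵀ)
        = Vᵀ * (a - A)⁻¹ * a * (a + A)⁻¹ * V ∧
      (Vᵀ * (a - A)⁻¹ * a * (a + A)⁻¹ * V).PosDef := by
  have hA' : Aᴴ = -A := by rwa [conjTranspose_eq_transpose_of_trivial]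
  have hsum := ha.conjTranspose_mul_inv_sub_mul_add_conjTranspose hA' V
  have hS := ha.conjTranspose_mul_inv_sub_mul_mul_inv_add_mul hA' hV
  simp only [conjTranspose_eq_transpose_of_trivial] at hsum hS
  refine ⟨isUnit_of_posDef_add_conjTranspose ?_, ?_, hS⟩
  · rw [conjTranspose_eq_transpose_of_trivial, hsum]
    exact hS.add hS
  · rw [hsum, ← two_smul ℝ, smul_smul]
    norm_num
end

section
/- Let a be symmetric positive definite, A skew-symmetric (both d×d), M ∈ ℝ^{d×k} of full column rank, and V ∈ ℝ^{d×(d−k)} a matrix with linearly independent columns satisfying VᵀM = 0. Then, with Φ := Mᵀ(a−A)M and Π := Vᵀ(a−A)⁻¹V, the identity V Π⁻¹ Vᵀ (a−A)⁻¹ + (a−A) M Φ⁻¹ Mᵀ = I_d holds. -/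
/-!
For `x ≠ 0`, skewness of `A` gives `x ⬝ᵥ (a - A) x = x ⬝ᵥ a x > 0`, so `S := a - A`, its
inverse and the compressions `Φ = Mᵀ S M`, `Π = Vᵀ S⁻¹ V` are invertible. The left-hand side
`P` fixes the columns of `V` (as `MᵀV = 0`) and of `S M` (as `VᵀM = 0`). These `d` columns are
linearly independent, since `V w + S M u = 0` gives `Φ u = 0` after multiplying by `Mᵀ`; so they
form a basis and `P = 1`.
-/

open Matrix

namespace Matrix

variable {n m p : Type*} [Fintype n]

/-- `Matrix.PosDef` without the symmetry requirement. -/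
def IsCoercive (B : Matrix n n ℝ) : Prop :=
  ∀ x, x ≠ 0 → 0 < x ⬝ᵥ B *ᵥ x

theorem dotProduct_mulVec_self_eq_zero_of_transpose_eq_neg {A : Matrix n n ℝ} (hA : Aᵀ = -A)
    (x : n → ℝ) : x ⬝ᵥ A *ᵥ x = 0 := by
  have h : x ⬝ᵥ A *ᵥ x = -(x ⬝ᵥ A *ᵥ x) :=
    calc x ⬝ᵥ A *ᵥ x = (Aᵀ *ᵥ x) ⬝ᵥ x := by rw [mulVec_transpose, dotProduct_mulVec]
      _ = -(x ⬝ᵥ A *ᵥ x) := by rw [hA, neg_mulVec, neg_dotProduct, dotProduct_comm]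
  linarith

theorem PosDef.isCoercive_sub_of_transpose_eq_neg {a A : Matrix n n ℝ} (ha : a.PosDef)
    (hA : Aᵀ = -A) : (a - A).IsCoercive := fun x hx => by
  simpa [sub_mulVec, dotProduct_mulVec_self_eq_zero_of_transpose_eq_neg hA x]
    using ha.dotProduct_mulVec_pos hx

namespace IsCoercive

variable {B : Matrix n n ℝ}

theorem mulVec_injective (hB : B.IsCoercive) : Function.Injective B.mulVec := by
  refine (injective_iff_map_eq_zero' B.mulVecLin).mpr fun x =>
    ⟨fun hx => ?_, fun hx => by rw [hx, map_zero]⟩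
  by_contra hx0
  have hpos := hB x hx0
  rw [show B *ᵥ x = 0 from hx, dotProduct_zero] at hpos
  exact lt_irrefl _ hpos

theorem isUnit [DecidableEq n] (hB : B.IsCoercive) : IsUnit B :=
  mulVec_injective_iff_isUnit.mp hB.mulVec_injective

theorem inv [DecidableEq n] (hB : B.IsCoercive) : B⁻¹.IsCoercive := by
  intro y hy
  have hdet := (isUnit_iff_isUnit_det B).mp hB.isUnit
  have hy' : y = B *ᵥ (B⁻¹ *ᵥ y) := by rw [mulVec_mulVec, mul_nonsing_inv B hdet, one_mulVec]
  have hz : B⁻¹ *ᵥ y ≠ 0 := fun h => hy (by rw [hy', h, mulVec_zero])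
  calc 0 < (B⁻¹ *ᵥ y) ⬝ᵥ B *ᵥ (B⁻¹ *ᵥ y) := hB _ hz
    _ = y ⬝ᵥ B⁻¹ *ᵥ y := by rw [← hy', dotProduct_comm]

theorem transpose_mul_mul [Fintype m] (hB : B.IsCoercive) {M : Matrix n m ℝ}
    (hM : Function.Injective M.mulVec) : (Mᵀ * B * M).IsCoercive := by
  intro u hu
  have hMu : M *ᵥ u ≠ 0 := fun h => hu (hM (by rw [h, mulVec_zero]))
  calc 0 < (M *ᵥ u) ⬝ᵥ B *ᵥ (M *ᵥ u) := hB _ hMu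
    _ = u ⬝ᵥ (Mᵀ * B * M) *ᵥ u := by
      rw [Matrix.mul_assoc, ← mulVec_mulVec, dotProduct_mulVec u, vecMul_transpose,
        ← mulVec_mulVec]

end IsCoercive

theorem mulVec_fromCols_injective [Fintype m] [Fintype p] {q R : Type*} [Ring R]
    {V : Matrix n m R} {W : Matrix n p R} (L : Matrix q n R) (hV : Function.Injective V.mulVec)
    (hLV : L * V = 0) (hLW : Function.Injective (L * W).mulVec) :
    Function.Injective (fromCols V W).mulVec := by
  intro x y hxy
  rw [← sub_eq_zero] at hxy ⊢
  rw [← mulVec_sub, fromCols_mulVec] at hxy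
  set z := x - y
  have hLz : (L * W) *ᵥ (z ∘ Sum.inr) = 0 := by
    simpa [mulVec_add, mulVec_mulVec, hLV] using congrArg (L *ᵥ ·) hxy
  have hr : z ∘ Sum.inr = 0 := hLW (by rw [hLz, mulVec_zero])
  have hl : z ∘ Sum.inl = 0 := hV (by rw [mulVec_zero]; simpa [hr] using hxy)
  funext i
  cases i with
  | inl j => exact congrFun hl j
  | inr j => exact congrFun hr j

theorem eq_one_of_mul_eq_self [DecidableEq n] [Fintype m] {K : Type*} [Field K] {P : Matrix n n K}
    {E : Matrix n m K} (hcard : Fintype.card m = Fintype.card n)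
    (hE : Function.Injective E.mulVec) (hPE : P * E = E) : P = 1 := by
  have hsurj : Function.Surjective E.mulVecLin :=
    (LinearMap.injective_iff_surjective_of_finrank_eq_finrank (by simpa using hcard)).mp hE
  refine ext_iff_mulVec.mpr fun x => ?_
  obtain ⟨y, rfl⟩ := hsurj x
  rw [mulVecLin_apply, mulVec_mulVec, hPE, one_mulVec]

end Matrix

/-- With `Φ := Mᵀ(a-A)M` and `Π := Vᵀ(a-A)⁻¹V`, where `VᵀM = 0` and both `M` and `V` have
full column rank, we have `V Π⁻¹ Vᵀ (a-A)⁻¹ + (a-A) M Φ⁻¹ Mᵀ = I`. -/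
theorem stmt5 {d k : ℕ} (hk : k ≤ d) (a A : Matrix (Fin d) (Fin d) ℝ)
    (M : Matrix (Fin d) (Fin k) ℝ) (V : Matrix (Fin d) (Fin (d - k)) ℝ)
    (ha : a.PosDef) (hA : Aᵀ = -A)
    (hM : Function.Injective M.mulVec) (hV : Function.Injective V.mulVec)
    (hVM : Vᵀ * M = 0) :
    V * (Vᵀ * (a - A)⁻¹ * V)⁻¹ * Vᵀ * (a - A)⁻¹
      + (a - A) * M * (Mᵀ * (a - A) * M)⁻¹ * Mᵀ = 1 := by
  set S := a - A
  set P := V * (Vᵀ * S⁻¹ * V)⁻¹ * Vᵀ * S⁻¹ + S * M * (Mᵀ * S * M)⁻¹ * Mᵀ with hP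
  have hS : S.IsCoercive := ha.isCoercive_sub_of_transpose_eq_neg hA
  have hPhi : IsUnit (Mᵀ * S * M) := (hS.transpose_mul_mul hM).isUnit
  have hPi : IsUnit (Vᵀ * S⁻¹ * V) := (hS.inv.transpose_mul_mul hV).isUnit
  have hS_cancel : S⁻¹ * (S * M) = M :=
    nonsing_inv_mul_cancel_left S M ((isUnit_iff_isUnit_det _).mp hS.isUnit)
  have hPhi_cancel := nonsing_inv_mul _ ((isUnit_iff_isUnit_det _).mp hPhi)
  have hPi_cancel := nonsing_inv_mul _ ((isUnit_iff_isUnit_det _).mp hPi)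
  have hMV : Mᵀ * V = 0 := by simpa using congrArg transpose hVM
  simp only [Matrix.mul_assoc] at hPhi_cancel hPi_cancel
  have hPV : P * V = V := by
    simp only [hP, Matrix.add_mul, Matrix.mul_assoc]
    rw [hPi_cancel, hMV, Matrix.mul_one, Matrix.mul_zero, Matrix.mul_zero, Matrix.mul_zero,
      add_zero]
  have hPSM : P * (S * M) = S * M := by
    simp only [hP, Matrix.add_mul, Matrix.mul_assoc]
    rw [hS_cancel, hVM, hPhi_cancel, Matrix.mul_one, Matrix.mul_zero, Matrix.mul_zero, zero_add]
  have hPhi_inj : Function.Injective (Mᵀ * (S * M)).mulVec := by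
    rwa [← Matrix.mul_assoc, mulVec_injective_iff_isUnit]
  exact eq_one_of_mul_eq_self (E := fromCols V (S * M)) (by simp [hk])
    (mulVec_fromCols_injective Mᵀ hV hMV hPhi_inj) (by rw [mul_fromCols, hPV, hPSM])
end

section
/- In the same setting, with B := P(a−A) = V Π⁻¹ Vᵀ, one has P a Pᵀ = ½(B + Bᵀ). In particular the symmetric part of B equals P a Pᵀ and is positive semidefinite. -/
/-!
The matrix `Φ = Mᵀ(a-A)M` has the positive definite symmetric part `MᵀaM`, so it is
invertible and `P` annihilates `(a-A)M`. Hence `P(a-A)Pᵀ = P(a-A) = B`, and transposing gives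
`Bᵀ = P(a+A)Pᵀ`. Adding the two and using `(a-A) + (a+A) = 2a` gives `B + Bᵀ = 2PaPᵀ`, a
congruence of the positive definite `a`.
-/

open Matrix

namespace Matrix

variable {n m : Type*} [Fintype n] [Fintype m]

theorem dotProduct_mulVec_self_eq_zero_of_transpose_eq_neg_s7 {R : Type*} [CommRing R]
    [IsAddTorsionFree R] {K : Matrix n n R} (hK : Kᵀ = -K) (x : n → R) :
    x ⬝ᵥ K *ᵥ x = 0 :=
  self_eq_neg.mp <| calc
    x ⬝ᵥ K *ᵥ x = x ⬝ᵥ Kᵀ *ᵥ x := by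
      rw [mulVec_transpose, dotProduct_comm x (x ᵥ* K), ← dotProduct_mulVec]
    _ = -(x ⬝ᵥ K *ᵥ x) := by rw [hK, neg_mulVec, dotProduct_neg]

theorem PosDef.isUnit_sub_of_transpose_eq_neg {𝕜 : Type*} [Field 𝕜] [PartialOrder 𝕜]
    [StarRing 𝕜] [TrivialStar 𝕜] [IsAddTorsionFree 𝕜] [DecidableEq n] {S K : Matrix n n 𝕜}
    (hS : S.PosDef) (hK : Kᵀ = -K) : IsUnit (S - K) := by
  rw [isUnit_iff_isUnit_det, isUnit_iff_ne_zero, Ne, ← exists_mulVec_eq_zero_iff]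
  rintro ⟨x, hx, hSKx⟩
  have hpos := hS.dotProduct_mulVec_pos hx
  have hzero : x ⬝ᵥ S *ᵥ x = 0 := by
    rw [← sub_add_cancel S K, add_mulVec, dotProduct_add, hSKx, dotProduct_zero, zero_add,
      dotProduct_mulVec_self_eq_zero_of_transpose_eq_neg_s7 hK]
  rw [star_trivial, hzero] at hpos
  exact hpos.false

theorem PosDef.isUnit_transpose_mul_sub_mul {𝕜 : Type*} [Field 𝕜] [PartialOrder 𝕜]
    [StarRing 𝕜] [TrivialStar 𝕜] [IsAddTorsionFree 𝕜] [DecidableEq m] {S K : Matrix n n 𝕜}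
    {M : Matrix n m 𝕜} (hS : S.PosDef) (hK : Kᵀ = -K) (hM : Function.Injective M.mulVec) :
    IsUnit (Mᵀ * (S - K) * M) := by
  rw [Matrix.mul_sub, Matrix.sub_mul]
  have hSM := hS.conjTranspose_mul_mul_same hM
  rw [conjTranspose_eq_transpose_of_trivial] at hSM
  exact hSM.isUnit_sub_of_transpose_eq_neg <| by
    simp only [transpose_mul, transpose_transpose, hK, Matrix.mul_neg, Matrix.neg_mul,
      Matrix.mul_assoc]

variable {R : Type*} [CommRing R] [DecidableEq n] [DecidableEq m]

/-- When `Mᵀ N M` is invertible, the projector onto the kernel of `Mᵀ` along the range of `N M`. -/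
noncomputable def obliqueProjection (N : Matrix n n R) (M : Matrix n m R) : Matrix n n R :=
  1 - N * M * (Mᵀ * N * M)⁻¹ * Mᵀ

variable {N : Matrix n n R} {M : Matrix n m R}

theorem obliqueProjection_mul_mul_self (hΦ : IsUnit (Mᵀ * N * M)) :
    obliqueProjection N M * N * M = 0 := by
  rw [obliqueProjection, Matrix.sub_mul, Matrix.sub_mul, Matrix.one_mul, Matrix.mul_assoc _ Mᵀ N,
    Matrix.mul_assoc _ (Mᵀ * N) M,
    nonsing_inv_mul_cancel_right _ _ ((isUnit_iff_isUnit_det _).mp hΦ), sub_self]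

theorem obliqueProjection_mul_mul_transpose (hΦ : IsUnit (Mᵀ * N * M)) :
    obliqueProjection N M * N * (obliqueProjection N M)ᵀ = obliqueProjection N M * N := by
  have hPT : (obliqueProjection N M)ᵀ = 1 - M * (N * M * (Mᵀ * N * M)⁻¹)ᵀ := by
    rw [obliqueProjection, transpose_sub, transpose_one, transpose_mul _ Mᵀ, transpose_transpose]
  rw [hPT, Matrix.mul_sub, Matrix.mul_one, ← Matrix.mul_assoc, obliqueProjection_mul_mul_self hΦ,
    Matrix.zero_mul, sub_zero]

end Matrix

theorem stmt7_general {d k : ℕ} (a A : Matrix (Fin d) (Fin d) ℝ)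
    (M : Matrix (Fin d) (Fin k) ℝ)
    (ha : a.PosDef) (hA : Aᵀ = -A)
    (hM : Function.Injective M.mulVec)
    (P B : Matrix (Fin d) (Fin d) ℝ)
    (hP : P = 1 - (a - A) * M * (Mᵀ * (a - A) * M)⁻¹ * Mᵀ)
    (hB : B = P * (a - A)) :
    P * a * Pᵀ = (1 / 2 : ℝ) • (B + Bᵀ) ∧ ((1 / 2 : ℝ) • (B + Bᵀ)).PosSemidef := by
  have haT : aᵀ = a := ha.isHermitian
  have hP' : P = obliqueProjection (a - A) M := hP
  have hB' : B = P * (a - A) * Pᵀ := by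
    rw [hB, hP', obliqueProjection_mul_mul_transpose (ha.isUnit_transpose_mul_sub_mul hA hM)]
  have hBT : Bᵀ = P * (a + A) * Pᵀ := by
    rw [hB', transpose_mul, transpose_mul, transpose_transpose, transpose_sub, haT, hA,
      sub_neg_eq_add, Matrix.mul_assoc]
  have hsym : P * a * Pᵀ = (1 / 2 : ℝ) • (B + Bᵀ) := by
    rw [hBT, hB', ← Matrix.add_mul, ← Matrix.mul_add, sub_add_add_cancel, ← two_smul ℝ a,
      Matrix.mul_smul, Matrix.smul_mul, smul_smul]
    norm_num
  refine ⟨hsym, hsym ▸ ?_⟩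
  simpa using ha.posSemidef.mul_mul_conjTranspose_same P

/-- With `B := P(a-A) = V Π⁻¹ Vᵀ`, one has `P a Pᵀ = ½(B + Bᵀ)`; in particular the
symmetric part of `B` equals `P a Pᵀ` and is positive semidefinite. -/
theorem stmt7 {d k : ℕ} (hk : k ≤ d) (a A : Matrix (Fin d) (Fin d) ℝ)
    (M : Matrix (Fin d) (Fin k) ℝ) (V : Matrix (Fin d) (Fin (d - k)) ℝ)
    (ha : a.PosDef) (hA : Aᵀ = -A)
    (hM : Function.Injective M.mulVec) (hV : Function.Injective V.mulVec)
    (hVM : Vᵀ * M = 0)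
    (P B : Matrix (Fin d) (Fin d) ℝ)
    (hP : P = 1 - (a - A) * M * (Mᵀ * (a - A) * M)⁻¹ * Mᵀ)
    (hB : B = P * (a - A)) :
    P * a * Pᵀ = (1 / 2 : ℝ) • (B + Bᵀ) ∧ ((1 / 2 : ℝ) • (B + Bᵀ)).PosSemidef :=
  stmt7_general a A M ha hA hM P B hP hB
end

section
/- Let Q₁ ∈ ℝ^{m×m} be symmetric positive definite and Q₂ ∈ ℝ^{m×m} skew-symmetric. Then Q₁ + Q₂, Q₁ − Q₂ and Q₁ − Q₂Q₁⁻¹Q₂ are invertible, and ½[(Q₁ + Q₂)⁻¹ + (Q₁ − Q₂)⁻¹] = (Q₁ − Q₂Q₁⁻¹Q₂)⁻¹ = (Q₁ + Q₂ᵀQ₁⁻¹Q₂)⁻¹. -/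
open Matrix

/-- For `Q₁` symmetric positive definite and `Q₂` skew-symmetric, the matrices `Q₁ + Q₂`,
`Q₁ - Q₂` and `Q₁ - Q₂Q₁⁻¹Q₂` are invertible, and
`½[(Q₁+Q₂)⁻¹ + (Q₁-Q₂)⁻¹] = (Q₁ - Q₂Q₁⁻¹Q₂)⁻¹ = (Q₁ + Q₂ᵀQ₁⁻¹Q₂)⁻¹`. -/
theorem stmt9 {m : ℕ} (Q₁ Q₂ : Matrix (Fin m) (Fin m) ℝ)
    (hQ₁ : Q₁.PosDef) (hQ₂ : Q₂ᵀ = -Q₂) :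
    IsUnit (Q₁ + Q₂) ∧ IsUnit (Q₁ - Q₂) ∧ IsUnit (Q₁ - Q₂ * Q₁⁻¹ * Q₂) ∧
      (1 / 2 : ℝ) • ((Q₁ + Q₂)⁻¹ + (Q₁ - Q₂)⁻¹) = (Q₁ - Q₂ * Q₁⁻¹ * Q₂)⁻¹ ∧
      (Q₁ - Q₂ * Q₁⁻¹ * Q₂)⁻¹ = (Q₁ + Q₂ᵀ * Q₁⁻¹ * Q₂)⁻¹ := by
  have hinv : Q₁⁻¹.PosDef := hQ₁.inv
  have hrw : Q₁ - Q₂ * Q₁⁻¹ * Q₂ = Q₁ + Q₂ᵀ * Q₁⁻¹ * Q₂ := by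
    rw [hQ₂]; simp [neg_mul, sub_eq_add_neg]
  have hS : (Q₁ - Q₂ * Q₁⁻¹ * Q₂).PosDef := by
    rw [hrw]
    refine hQ₁.add_posSemidef ?_
    have := hinv.posSemidef.mul_mul_conjTranspose_same Q₂ᵀ
    have he : (Q₂ᵀ)ᴴ = Q₂ := by ext i j; simp [conjTranspose]
    rwa [he] at this
  have hQ₁u : IsUnit Q₁ := hQ₁.isUnit
  have hQ₁inv : Q₁ * Q₁⁻¹ = 1 := mul_nonsing_inv _ (isUnit_iff_isUnit_det _ |>.1 hQ₁u)
  have hQ₁inv' : Q₁⁻¹ * Q₁ = 1 := nonsing_inv_mul _ (isUnit_iff_isUnit_det _ |>.1 hQ₁u)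
  -- key factorizations
  have key1 : (Q₁ + Q₂) * Q₁⁻¹ * (Q₁ - Q₂) = Q₁ - Q₂ * Q₁⁻¹ * Q₂ := by
    have e : (Q₁ + Q₂) * Q₁⁻¹ * (Q₁ - Q₂)
        = Q₁ * Q₁⁻¹ * Q₁ - Q₁ * Q₁⁻¹ * Q₂ + Q₂ * (Q₁⁻¹ * Q₁) - Q₂ * Q₁⁻¹ * Q₂ := by
      noncomm_ring
    rw [e, hQ₁inv, hQ₁inv']; simp only [Matrix.one_mul, Matrix.mul_one]
    abel
  have key2 : (Q₁ - Q₂) * Q₁⁻¹ * (Q₁ + Q₂) = Q₁ - Q₂ * Q₁⁻¹ * Q₂ := by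
    have e : (Q₁ - Q₂) * Q₁⁻¹ * (Q₁ + Q₂)
        = Q₁ * Q₁⁻¹ * Q₁ + Q₁ * Q₁⁻¹ * Q₂ - Q₂ * (Q₁⁻¹ * Q₁) - Q₂ * Q₁⁻¹ * Q₂ := by
      noncomm_ring
    rw [e, hQ₁inv, hQ₁inv']; simp only [Matrix.one_mul, Matrix.mul_one]
    abel
  have hSu : IsUnit (Q₁ - Q₂ * Q₁⁻¹ * Q₂) := hS.isUnit
  have hSd : IsUnit ((Q₁ - Q₂ * Q₁⁻¹ * Q₂).det) := (isUnit_iff_isUnit_det _).1 hSu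
  have hdet : IsUnit ((Q₁ + Q₂).det) ∧ IsUnit ((Q₁ - Q₂).det) := by
    have := hSd
    rw [← key1, det_mul, det_mul] at this
    exact ⟨isUnit_of_mul_isUnit_left (isUnit_of_mul_isUnit_left this),
      isUnit_of_mul_isUnit_right this⟩
  have hPu : IsUnit (Q₁ + Q₂) := (isUnit_iff_isUnit_det _).2 hdet.1
  have hMu : IsUnit (Q₁ - Q₂) := (isUnit_iff_isUnit_det _).2 hdet.2
  have hPinv : (Q₁ + Q₂) * (Q₁ + Q₂)⁻¹ = 1 := mul_nonsing_inv _ hdet.1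
  have hMinv : (Q₁ - Q₂) * (Q₁ - Q₂)⁻¹ = 1 := mul_nonsing_inv _ hdet.2
  refine ⟨hPu, hMu, hSu, ?_, by rw [hrw]⟩
  -- show S * ((1/2) • sum) = 1
  have h1 : (Q₁ - Q₂ * Q₁⁻¹ * Q₂) * (Q₁ + Q₂)⁻¹ = (Q₁ - Q₂) * Q₁⁻¹ := by
    rw [← key2, Matrix.mul_assoc, hPinv, Matrix.mul_one]
  have h2 : (Q₁ - Q₂ * Q₁⁻¹ * Q₂) * (Q₁ - Q₂)⁻¹ = (Q₁ + Q₂) * Q₁⁻¹ := by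
    rw [← key1, Matrix.mul_assoc, hMinv, Matrix.mul_one]
  have hsum : (Q₁ - Q₂ * Q₁⁻¹ * Q₂) * ((1 / 2 : ℝ) • ((Q₁ + Q₂)⁻¹ + (Q₁ - Q₂)⁻¹)) = 1 := by
    rw [Matrix.mul_smul, Matrix.mul_add, h1, h2, ← add_mul]
    have : (Q₁ - Q₂) + (Q₁ + Q₂) = (2 : ℝ) • Q₁ := by
      rw [two_smul]; abel
    rw [this, Matrix.smul_mul, hQ₁inv, smul_smul]
    norm_num
  exact (inv_eq_right_inv hsum).symm
end

section
/- Let a be symmetric positive definite, A skew-symmetric (both d×d), and V ∈ ℝ^{d×m} with linearly independent columns. Set Π := Vᵀ(a−A)⁻¹V and Π₀ := Vᵀa⁻¹V. Then ½(Π⁻¹ + Π⁻ᵀ) ⪰ Π₀⁻¹ in the Loewner order. -/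
open Matrix

/-!
Write `M = a - A`, so that `M + Mᵀ = 2a` and `Π = VᵀM⁻¹V`. The identity `Xᵀ⁻¹(X + Xᵀ)X⁻¹ = X⁻¹ + Xᵀ⁻¹`,
applied to `M` and then to `Π`, shows that `K = M⁻¹VΠ⁻¹` satisfies `Kᵀ(M + Mᵀ)K = Π⁻¹ + Π⁻ᵀ`; since
also `VᵀK = 1`, this gives `½(Π⁻¹ + Π⁻ᵀ) - Π₀⁻¹ = Kᵀ(a - VΠ₀⁻¹Vᵀ)K`. The middle factor is positive
semidefinite, being the Schur complement of `Π₀` in the block matrix `[[a, V], [Vᵀ, Π₀]]`, whose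
Schur complement of `a` vanishes. Invertibility of `M` and `Π` holds because their symmetric parts
`2a` and `(M⁻¹V)ᵀ(M + Mᵀ)(M⁻¹V)` are positive definite.
-/
namespace Matrix

variable {n m α : Type*} [Fintype n] [DecidableEq n]

section CommRing

variable [CommRing α]

theorem inv_transpose_mul_add_transpose_mul_inv {M : Matrix n n α} (hM : IsUnit M) :
    M⁻¹ᵀ * (M + Mᵀ) * M⁻¹ = M⁻¹ + M⁻¹ᵀ := by
  have hdet := (isUnit_iff_isUnit_det M).1 hM
  rw [Matrix.mul_add, Matrix.add_mul, Matrix.mul_assoc, mul_nonsing_inv _ hdet, Matrix.mul_one,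
    ← transpose_mul, mul_nonsing_inv _ hdet, transpose_one, Matrix.one_mul, add_comm]

theorem transpose_mul_inv_mul_add_transpose {M : Matrix n n α} (hM : IsUnit M) (V : Matrix n m α) :
    Vᵀ * M⁻¹ * V + (Vᵀ * M⁻¹ * V)ᵀ = (M⁻¹ * V)ᵀ * (M + Mᵀ) * (M⁻¹ * V) := by
  calc Vᵀ * M⁻¹ * V + (Vᵀ * M⁻¹ * V)ᵀ = Vᵀ * (M⁻¹ + M⁻¹ᵀ) * V := by
        simp only [transpose_mul, transpose_transpose, Matrix.mul_add, Matrix.add_mul,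
          Matrix.mul_assoc]
    _ = (M⁻¹ * V)ᵀ * (M + Mᵀ) * (M⁻¹ * V) := by
        rw [← inv_transpose_mul_add_transpose_mul_inv hM, transpose_mul]
        simp only [Matrix.mul_assoc]

theorem transpose_mul_add_transpose_mul_of_compression [Fintype m] [DecidableEq m]
    {M : Matrix n n α} (hM : IsUnit M) {V : Matrix n m α} (hP : IsUnit (Vᵀ * M⁻¹ * V)) :
    (M⁻¹ * V * (Vᵀ * M⁻¹ * V)⁻¹)ᵀ * (M + Mᵀ) * (M⁻¹ * V * (Vᵀ * M⁻¹ * V)⁻¹) =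
      (Vᵀ * M⁻¹ * V)⁻¹ + (Vᵀ * M⁻¹ * V)⁻¹ᵀ := by
  rw [← inv_transpose_mul_add_transpose_mul_inv hP, transpose_mul_inv_mul_add_transpose hM,
    transpose_mul]
  simp only [Matrix.mul_assoc]

end CommRing

theorem isUnit_of_posDef_add_transpose {M : Matrix n n ℝ} (hM : (M + Mᵀ).PosDef) : IsUnit M := by
  refine mulVec_injective_iff_isUnit.1 <| (injective_iff_map_eq_zero' (mulVecLin M)).2 fun x => ?_
  refine ⟨fun hx => ?_, fun hx => by simp [hx]⟩
  by_contra hx0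
  have hpos := hM.dotProduct_mulVec_pos hx0
  rw [mulVecLin_apply] at hx
  rw [star_trivial, add_mulVec, dotProduct_add, mulVec_transpose, dotProduct_comm x (x ᵥ* M),
    ← dotProduct_mulVec, hx] at hpos
  simp at hpos

theorem posDef_transpose_mul_inv_mul_add_transpose [Fintype m] {M : Matrix n n ℝ}
    (hM : (M + Mᵀ).PosDef) {V : Matrix n m ℝ} (hV : Function.Injective V.mulVec) :
    (Vᵀ * M⁻¹ * V + (Vᵀ * M⁻¹ * V)ᵀ).PosDef := by
  have hMinv : Function.Injective M⁻¹.mulVec :=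
    mulVec_injective_of_isUnit (isUnit_nonsing_inv_iff.2 (isUnit_of_posDef_add_transpose hM))
  have hMV : Function.Injective (M⁻¹ * V).mulVec := fun x y h =>
    hV (hMinv (by simpa only [mulVec_mulVec] using h))
  rw [transpose_mul_inv_mul_add_transpose (isUnit_of_posDef_add_transpose hM),
    ← conjTranspose_eq_transpose_of_trivial]
  exact hM.conjTranspose_mul_mul_same hMV

theorem PosDef.posSemidef_sub_mul_inv_mul_conjTranspose {K : Type*} [Field K] [PartialOrder K]
    [StarRing K] [StarOrderedRing K] {a : Matrix n n K} (ha : a.PosDef) [Fintype m] [DecidableEq m]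
    {V : Matrix n m K} (hV : Function.Injective V.mulVec) :
    (a - V * (Vᴴ * a⁻¹ * V)⁻¹ * Vᴴ).PosSemidef := by
  have hP : (Vᴴ * a⁻¹ * V).PosDef := ha.inv.conjTranspose_mul_mul_same hV
  let := ha.isUnit.invertible
  let := hP.isUnit.invertible
  rw [← PosDef.fromBlocks₂₂ a V hP, PosDef.fromBlocks₁₁ V _ ha, sub_self]
  exact .zero

end Matrix

/-- With `Π := Vᵀ(a-A)⁻¹V` and `Π₀ := Vᵀa⁻¹V`, one has `½(Π⁻¹ + Π⁻ᵀ) ⪰ Π₀⁻¹` in the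
Loewner order. -/
theorem stmt12 {d m : ℕ} (a A : Matrix (Fin d) (Fin d) ℝ) (V : Matrix (Fin d) (Fin m) ℝ)
    (ha : a.PosDef) (hA : Aᵀ = -A) (hV : Function.Injective V.mulVec) :
    ((1 / 2 : ℝ) • ((Vᵀ * (a - A)⁻¹ * V)⁻¹ + ((Vᵀ * (a - A)⁻¹ * V)⁻¹)ᵀ)
      - (Vᵀ * a⁻¹ * V)⁻¹).PosSemidef := by
  set M := a - A
  have hsym : M + Mᵀ = (2 : ℝ) • a := by
    rw [transpose_sub, ← conjTranspose_eq_transpose_of_trivial a, ha.isHermitian.eq, hA]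
    simp only [M, two_smul]
    abel
  have hMpd : (M + Mᵀ).PosDef := hsym ▸ ha.smul two_pos
  have hM := isUnit_of_posDef_add_transpose hMpd
  have hP := isUnit_of_posDef_add_transpose (posDef_transpose_mul_inv_mul_add_transpose hMpd hV)
  set K := M⁻¹ * V * (Vᵀ * M⁻¹ * V)⁻¹
  have hVK : Vᵀ * K = 1 := by
    simp only [K, ← Matrix.mul_assoc]
    exact mul_nonsing_inv _ ((isUnit_iff_isUnit_det _).1 hP)
  have hKaK : Kᵀ * a * K = (1 / 2 : ℝ) • ((Vᵀ * M⁻¹ * V)⁻¹ + (Vᵀ * M⁻¹ * V)⁻¹ᵀ) := by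
    rw [← transpose_mul_add_transpose_mul_of_compression hM hP, hsym, Matrix.mul_smul,
      Matrix.smul_mul, smul_smul, one_div_mul_cancel two_ne_zero, one_smul]
  have hKVK : Kᵀ * (V * (Vᵀ * a⁻¹ * V)⁻¹ * Vᵀ) * K = (Vᵀ * a⁻¹ * V)⁻¹ := by
    calc _ = (Vᵀ * K)ᵀ * (Vᵀ * a⁻¹ * V)⁻¹ * (Vᵀ * K) := by
          simp only [transpose_mul, transpose_transpose, Matrix.mul_assoc]
      _ = _ := by rw [hVK, transpose_one, Matrix.one_mul, Matrix.mul_one]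
  have hconj := (ha.posSemidef_sub_mul_inv_mul_conjTranspose hV).conjTranspose_mul_mul_same K
  simp only [conjTranspose_eq_transpose_of_trivial] at hconj
  rwa [Matrix.mul_sub, Matrix.sub_mul, hKaK, hKVK] at hconj
end

section
/- In the setting of the previous statement, with P := I_d − (a−A)MΦ⁻¹Mᵀ, one has e^{−sΓ} = P + (a−A)M e^{−sΦ} Φ⁻¹Mᵀ for all s ≥ 0; and since all eigenvalues of Φ have positive real part, e^{−sΓ} → P as s → ∞. -/
/-!
With `X = (a - A)M` and `Y = Mᵀ` we have `Γ = XY` and `Φ = YX`. The relations `Γ X = X Φ` and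
`Γ P = 0` pass to exponentials, giving `e^{-sΓ} X = X e^{-sΦ}` and `e^{-sΓ} P = P`; splitting
`1 = P + X Φ⁻¹ Y` yields the formula. Since `A` is skew, `xᵀ Φ x = (Mx)ᵀ a (Mx) > 0` for `x ≠ 0`,
so `Φ` is invertible and coercive, `xᵀ Φ x ≥ c |x|²`; then `u = e^{-sΦ} x` satisfies
`(|u|²)' = -2 uᵀ Φ u ≤ -2c |u|²`, hence `|u(s)| ≤ e^{-cs} |x|` and `e^{-sΦ} → 0`.
-/

open Matrix NormedSpace Filter Topology
open scoped RealInnerProductSpace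

namespace Matrix

section Exponential

variable {m n 𝕂 : Type*} [Fintype m] [DecidableEq m] [Fintype n] [DecidableEq n] [RCLike 𝕂]

theorem pow_mul_eq_mul_pow_of_mul_eq {B : Matrix m m 𝕂} {C : Matrix n n 𝕂} {Q : Matrix m n 𝕂}
    (h : B * Q = Q * C) (k : ℕ) : B ^ k * Q = Q * C ^ k := by
  induction k with
  | zero => simp
  | succ k ih =>
    rw [pow_succ', Matrix.mul_assoc, ih, ← Matrix.mul_assoc, h, Matrix.mul_assoc, ← pow_succ']

theorem exp_mul_eq_mul_exp_of_mul_eq {B : Matrix m m 𝕂} {C : Matrix n n 𝕂} {Q : Matrix m n 𝕂}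
    (h : B * Q = Q * C) : exp B * Q = Q * exp C := by
  -- any matrix norm makes the exponential series summable
  open scoped Matrix.Norms.Operator in
  have hB := (expSeries_summable' (𝕂 := 𝕂) B).map_tsum (addMonoidHomMulRight Q)
    (continuous_id.matrix_mul continuous_const)
  open scoped Matrix.Norms.Operator in
  have hC := (expSeries_summable' (𝕂 := 𝕂) C).map_tsum (addMonoidHomMulLeft Q)
    (continuous_const.matrix_mul continuous_id)
  simp only [addMonoidHomMulRight_apply, addMonoidHomMulLeft_apply] at hB hC
  simp only [exp_eq_tsum 𝕂]
  refine hB.trans (Eq.trans (tsum_congr fun k => ?_) hC.symm)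
  rw [Matrix.smul_mul, Matrix.mul_smul, pow_mul_eq_mul_pow_of_mul_eq h]

theorem exp_smul_mul_eq_of_isUnit_det (X : Matrix m n 𝕂) (Y : Matrix n m 𝕂)
    (hYX : IsUnit (Y * X).det) (s : 𝕂) :
    exp (s • (X * Y)) = (1 - X * (Y * X)⁻¹ * Y) + X * exp (s • (Y * X)) * (Y * X)⁻¹ * Y := by
  have hker : s • (X * Y) * (1 - X * (Y * X)⁻¹ * Y) = (1 - X * (Y * X)⁻¹ * Y) * 0 := by
    rw [Matrix.mul_zero, Matrix.smul_mul, Matrix.mul_sub, Matrix.mul_one]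
    simp only [Matrix.mul_assoc]
    rw [← Matrix.mul_assoc Y X, ← Matrix.mul_assoc (Y * X), Matrix.mul_nonsing_inv _ hYX,
      Matrix.one_mul, sub_self, smul_zero]
  have hinter : s • (X * Y) * X = X * (s • (Y * X)) := by
    rw [Matrix.smul_mul, Matrix.mul_smul, Matrix.mul_assoc]
  calc exp (s • (X * Y))
      = exp (s • (X * Y)) * (1 - X * (Y * X)⁻¹ * Y)
          + exp (s • (X * Y)) * (X * (Y * X)⁻¹ * Y) := by
        rw [← Matrix.mul_add, sub_add_cancel, Matrix.mul_one]
    _ = (1 - X * (Y * X)⁻¹ * Y) + X * exp (s • (Y * X)) * (Y * X)⁻¹ * Y := by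
      rw [exp_mul_eq_mul_exp_of_mul_eq hker, exp_zero, Matrix.mul_one, ← Matrix.mul_assoc,
        ← Matrix.mul_assoc, exp_mul_eq_mul_exp_of_mul_eq hinter]

end Exponential

section QuadraticForm

variable {n : Type*} [Fintype n]

theorem isUnit_det_of_dotProduct_mulVec_pos [DecidableEq n] {Φ : Matrix n n ℝ}
    (hΦ : ∀ x ≠ 0, 0 < x ⬝ᵥ Φ *ᵥ x) : IsUnit Φ.det := by
  rw [← isUnit_iff_isUnit_det, ← mulVec_injective_iff_isUnit]
  intro x y hxy
  by_contra hne
  have := hΦ (x - y) (sub_ne_zero.2 hne)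
  rw [mulVec_sub, hxy, sub_self, dotProduct_zero] at this
  exact this.false

theorem dotProduct_mulVec_eq_zero_of_transpose_eq_neg {A : Matrix n n ℝ} (hA : Aᵀ = -A)
    (v : n → ℝ) : v ⬝ᵥ A *ᵥ v = 0 := by
  have h : v ⬝ᵥ A *ᵥ v = -(v ⬝ᵥ A *ᵥ v) := by
    conv_lhs => rw [dotProduct_mulVec, ← mulVec_transpose, hA, neg_mulVec, neg_dotProduct,
      dotProduct_comm]
  linarith

theorem dotProduct_transpose_mul_sub_mul_mulVec_pos {k : Type*} [Fintype k] {a A : Matrix n n ℝ}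
    {M : Matrix n k ℝ} (ha : a.PosDef) (hA : Aᵀ = -A) (hM : Function.Injective M.mulVec)
    {x : k → ℝ} (hx : x ≠ 0) : 0 < x ⬝ᵥ (Mᵀ * (a - A) * M) *ᵥ x := by
  rw [← mulVec_mulVec, ← mulVec_mulVec, dotProduct_mulVec, vecMul_transpose, sub_mulVec,
    dotProduct_sub, dotProduct_mulVec_eq_zero_of_transpose_eq_neg hA, sub_zero]
  simpa using ha.dotProduct_mulVec_pos (hM.ne hx |>.trans_eq (mulVec_zero M))

end QuadraticForm

end Matrix

namespace ContinuousLinearMap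

variable {E : Type*} [NormedAddCommGroup E] [InnerProductSpace ℝ E]

theorem exists_pos_mul_norm_sq_le_inner [FiniteDimensional ℝ E] (T : E →L[ℝ] E)
    (hT : ∀ x ≠ 0, 0 < ⟪x, T x⟫) : ∃ c > 0, ∀ x, c * ‖x‖ ^ 2 ≤ ⟪x, T x⟫ := by
  rcases subsingleton_or_nontrivial E with _ | _
  · exact ⟨1, one_pos, fun x => by simp [Subsingleton.elim x 0]⟩
  obtain ⟨x₀, hx₀, hmin⟩ := (isCompact_sphere (0 : E) 1).exists_isMinOn
    (NormedSpace.sphere_nonempty.2 zero_le_one)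
    (by fun_prop : Continuous fun x => ⟪x, T x⟫).continuousOn
  rw [mem_sphere_zero_iff_norm] at hx₀
  refine ⟨⟪x₀, T x₀⟫, hT x₀ (norm_ne_zero_iff.1 (by simp [hx₀])), fun x => ?_⟩
  rcases eq_or_ne x 0 with rfl | hx
  · simp
  have hnx : 0 < ‖x‖ := norm_pos_iff.2 hx
  have hle : ⟪x₀, T x₀⟫ ≤ ⟪‖x‖⁻¹ • x, T (‖x‖⁻¹ • x)⟫ :=
    hmin (a := ‖x‖⁻¹ • x) (by simp [norm_smul, hnx.ne'])
  simp only [map_smul, real_inner_smul_left, real_inner_smul_right] at hle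
  calc ⟪x₀, T x₀⟫ * ‖x‖ ^ 2 ≤ ‖x‖⁻¹ * (‖x‖⁻¹ * ⟪x, T x⟫) * ‖x‖ ^ 2 := by gcongr
    _ = ⟪x, T x⟫ := by field_simp

theorem norm_exp_neg_smul_apply_le [CompleteSpace E] {T : E →L[ℝ] E} {c : ℝ}
    (hc : ∀ x, c * ‖x‖ ^ 2 ≤ ⟪x, T x⟫) (x : E) {s : ℝ} (hs : 0 ≤ s) :
    ‖exp ((-s) • T) x‖ ≤ Real.exp (-(c * s)) * ‖x‖ := by
  set u : ℝ → E := fun t => exp ((-t) • T) x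
  have hu : ∀ t, HasDerivAt u (-T (u t)) t := fun t => by
    simpa [u] using (hasDerivAt_exp_smul_const' (𝕂 := ℝ) (-T) t).clm_apply (hasDerivAt_const t x)
  have hanti : Antitone fun t => Real.exp (2 * c * t) * ‖u t‖ ^ 2 := by
    refine antitone_of_hasDerivAt_nonpos (fun t => ((hasDerivAt_id t).const_mul (2 * c)).exp.mul
      (hu t).norm_sq) fun t => ?_
    have : Real.exp (2 * c * t) * (c * ‖u t‖ ^ 2 - ⟪u t, T (u t)⟫) ≤ 0 :=
      mul_nonpos_of_nonneg_of_nonpos (Real.exp_pos _).le (sub_nonpos.2 (hc (u t)))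
    simp only [inner_neg_right, id, mul_one, Pi.zero_apply]
    linarith
  have hsq : (Real.exp (c * s) * ‖u s‖) ^ 2 ≤ ‖x‖ ^ 2 := by
    simpa [u, mul_pow, ← Real.exp_nat_mul, mul_comm, mul_left_comm, mul_assoc] using hanti hs
  rw [pow_le_pow_iff_left₀ (by positivity) (norm_nonneg _) two_ne_zero] at hsq
  rw [Real.exp_neg, ← div_eq_inv_mul, le_div_iff₀' (Real.exp_pos _)]
  exact hsq

theorem tendsto_exp_neg_smul_nhds_zero [FiniteDimensional ℝ E] (T : E →L[ℝ] E)
    (hT : ∀ x ≠ 0, 0 < ⟪x, T x⟫) : Tendsto (fun s : ℝ => exp ((-s) • T)) atTop (𝓝 0) := by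
  have := FiniteDimensional.complete ℝ E
  obtain ⟨c, hc, hcT⟩ := T.exists_pos_mul_norm_sq_le_inner hT
  refine squeeze_zero_norm' ?_ (Real.tendsto_exp_neg_atTop_nhds_zero.comp
    (tendsto_id.const_mul_atTop hc))
  filter_upwards [eventually_ge_atTop 0] with s hs
  exact opNorm_le_bound _ (Real.exp_pos _).le fun x => norm_exp_neg_smul_apply_le hcT x hs

end ContinuousLinearMap

namespace Matrix

variable {n : Type*} [Fintype n] [DecidableEq n]

theorem tendsto_exp_neg_smul_nhds_zero (Φ : Matrix n n ℝ) (hΦ : ∀ x ≠ 0, 0 < x ⬝ᵥ Φ *ᵥ x) :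
    Tendsto (fun s : ℝ => exp ((-s) • Φ)) atTop (𝓝 0) := by
  let e := toEuclideanCLM (n := n) (𝕜 := ℝ)
  have he : Continuous e.symm :=
    LinearMap.continuous_of_finiteDimensional e.symm.toAlgEquiv.toLinearMap
  have hexp : ∀ s : ℝ, e.symm (exp ((-s) • e Φ)) = exp ((-s) • Φ) := fun s => by
    open scoped Matrix.Norms.Operator in
    rw [map_exp_of_mem_ball (𝕂 := ℝ) e.symm he _
      ((expSeries_radius_eq_top ℝ (EuclideanSpace ℝ n →L[ℝ] EuclideanSpace ℝ n)).symm ▸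
        edist_lt_top _ _), map_smul, e.symm_apply_apply]
    -- the two sides differ only in the (definitionally equal) topologies on matrices
    rfl
  have hpos : ∀ x ≠ 0, 0 < ⟪x, e Φ x⟫ := fun x hx => by
    rw [inner_toEuclideanCLM]
    exact hΦ _ (by simpa using hx)
  have := (he.tendsto 0).comp ((e Φ).tendsto_exp_neg_smul_nhds_zero hpos)
  rw [map_zero] at this
  exact this.congr hexp

end Matrix

/-- With `Γ := (a-A)MMᵀ`, `Φ := Mᵀ(a-A)M` and `P := I - (a-A)MΦ⁻¹Mᵀ`, one has
`e^{-sΓ} = P + (a-A)M e^{-sΦ} Φ⁻¹Mᵀ` for all `s ≥ 0`, and `e^{-sΓ} → P` as `s → ∞`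
(entrywise). -/
theorem stmt17 {d k : ℕ} (a A : Matrix (Fin d) (Fin d) ℝ) (M : Matrix (Fin d) (Fin k) ℝ)
    (ha : a.PosDef) (hA : Aᵀ = -A) (hM : Function.Injective M.mulVec)
    (P : Matrix (Fin d) (Fin d) ℝ)
    (hP : P = 1 - (a - A) * M * (Mᵀ * (a - A) * M)⁻¹ * Mᵀ) :
    (∀ s : ℝ, 0 ≤ s →
      NormedSpace.exp ((-s) • ((a - A) * M * Mᵀ))
        = P + (a - A) * M * NormedSpace.exp ((-s) • (Mᵀ * (a - A) * M))
            * (Mᵀ * (a - A) * M)⁻¹ * Mᵀ) ∧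
    (∀ i j : Fin d,
      Filter.Tendsto (fun s : ℝ => NormedSpace.exp ((-s) • ((a - A) * M * Mᵀ)) i j)
        Filter.atTop (nhds (P i j))) := by
  set Φ := Mᵀ * (a - A) * M
  have hΦ : ∀ x ≠ 0, 0 < x ⬝ᵥ Φ *ᵥ x := fun x hx =>
    dotProduct_transpose_mul_sub_mul_mulVec_pos ha hA hM hx
  have hΦ_assoc : Φ = Mᵀ * ((a - A) * M) := Matrix.mul_assoc _ _ _
  have hid : ∀ s : ℝ,
      exp ((-s) • ((a - A) * M * Mᵀ)) = P + (a - A) * M * exp ((-s) • Φ) * Φ⁻¹ * Mᵀ := by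
    intro s
    rw [hP, hΦ_assoc]
    exact exp_smul_mul_eq_of_isUnit_det _ _ (hΦ_assoc ▸ isUnit_det_of_dotProduct_mulVec_pos hΦ) _
  have hlim : Tendsto (fun s : ℝ => P + (a - A) * M * exp ((-s) • Φ) * Φ⁻¹ * Mᵀ) atTop (𝓝 P) := by
    have hcont : Continuous fun E : Matrix (Fin k) (Fin k) ℝ => P + (a - A) * M * E * Φ⁻¹ * Mᵀ :=
      by fun_prop
    simpa [Function.comp_def] using (hcont.tendsto 0).comp (tendsto_exp_neg_smul_nhds_zero Φ hΦ)
  refine ⟨fun s _ => hid s, fun i j => ?_⟩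
  simp_rw [hid]
  exact tendsto_pi_nhds.1 (tendsto_pi_nhds.1 hlim i) j
end
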